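/- Let H be a 2k-dimensional complex vector space with symplectic basis μ_1, …, μ_k, λ_1, …, λ_k, let c : {1, …, k} → {1, …, n} be a surjective map (a coloring), and let Λ be a real symmetric k × k matrix such that for every pair of colors s, t ∈ {1, …, n} the block sum vanishes: Σ_{i : c(i)=s} Σ_{j : c(j)=t} Λ_{ij} = 0. Set M = span_ℂ{μ_1, …, μ_k}, let P be the complex span of the vectors μ_i − μ_j for all pairs i, j with c(i) = c(j) together with the vectors v_s = Σ_{i : c(i)=s} λ_i for each color s, and let V_Λ = span_ℂ{w_1, …, w_k} with w_i = λ_i − Σ_{j=1}^k Λ_{ij} μ_j. Then the Maslov triple index satisfies τ(M, P, V_Λ) = 0. -/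

import Mathlib

open Complex

/-- A nondegenerate skew-Hermitian sesquilinear form (conjugate-linear in the
first variable, linear in the second). -/
structure IsSymplForm {H : Type*} [AddCommGroup H] [Module ℂ H] (ω : H → H → ℂ) : Prop where
  add_left : ∀ x y z : H, ω (x + y) z = ω x z + ω y z
  smul_left : ∀ (c : ℂ) (x y : H), ω (c • x) y = (starRingEnd ℂ) c * ω x y
  add_right : ∀ x y z : H, ω x (y + z) = ω x y + ω x z
  smul_right : ∀ (c : ℂ) (x y : H), ω x (c • y) = c * ω x y
  skew : ∀ x y : H, ω y x = -((starRingEnd ℂ) (ω x y))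
  nondeg : ∀ x : H, (∀ y : H, ω x y = 0) → x = 0

/-- A subspace is Lagrangian if it equals its orthogonal complement. -/
def IsLagrangian {H : Type*} [AddCommGroup H] [Module ℂ H]
    (ω : H → H → ℂ) (L : Submodule ℂ H) : Prop :=
  (L : Set H) = {x : H | ∀ l ∈ L, ω x l = 0}

/-- A choice of the `L1`-component of a decomposition of `x ∈ L1 ⊔ L2`. -/
noncomputable def firstPart {H : Type*} [AddCommGroup H] [Module ℂ H]
    (L1 L2 : Submodule ℂ H) (x : H) : H :=
  letI := Classical.propDecidable (x ∈ L1 ⊔ L2)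
  if hx : x ∈ L1 ⊔ L2 then Classical.choose (Submodule.mem_sup.mp hx) else 0

/-- The Maslov form of a triple of Lagrangians, computed via a choice of
decompositions: `ψ(a,b) = ω(a₁, b₂)`. -/
noncomputable def maslovForm {H : Type*} [AddCommGroup H] [Module ℂ H]
    (ω : H → H → ℂ) (L1 L2 : Submodule ℂ H) (a b : H) : ℂ :=
  ω (firstPart L1 L2 a) (b - firstPart L1 L2 b)

/-- The maximal dimension of a subspace of `W` on which `ψ` is positive definite. -/
noncomputable def posIndex {H : Type*} [AddCommGroup H] [Module ℂ H]
    (ψ : H → H → ℂ) (W : Submodule ℂ H) : ℕ :=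
  sSup {d : ℕ | ∃ S : Submodule ℂ H, S ≤ W ∧ Module.finrank ℂ S = d ∧
    ∀ x ∈ S, x ≠ 0 → 0 < (ψ x x).re}

/-- The maximal dimension of a subspace of `W` on which `ψ` is negative definite. -/
noncomputable def negIndex {H : Type*} [AddCommGroup H] [Module ℂ H]
    (ψ : H → H → ℂ) (W : Submodule ℂ H) : ℕ :=
  sSup {d : ℕ | ∃ S : Submodule ℂ H, S ≤ W ∧ Module.finrank ℂ S = d ∧
    ∀ x ∈ S, x ≠ 0 → (ψ x x).re < 0}

/-- The Maslov triple index: the signature of the Maslov form of `(L1, L2, L3)`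
on `(L1 ⊔ L2) ⊓ L3`. -/
noncomputable def maslovIndex {H : Type*} [AddCommGroup H] [Module ℂ H]
    (ω : H → H → ℂ) (L1 L2 L3 : Submodule ℂ H) : ℤ :=
  (posIndex (maslovForm ω L1 L2) ((L1 ⊔ L2) ⊓ L3) : ℤ) -
  (negIndex (maslovForm ω L1 L2) ((L1 ⊔ L2) ⊓ L3) : ℤ)

/-!
The Maslov form vanishes identically on `(M + P) ∩ V_Λ`. Since `M` and `P` are isotropic,
`ψ(x, x) = ω(m, q)` for every decomposition `x = m + q` with `m ∈ M`, `q ∈ P`. If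
`x = ∑ aᵢ wᵢ` lies in `M + P`, pairing `x` with `μᵢ - μⱼ ∈ M ∩ P` (for `c i = c j`) shows that
`a` is constant on colour classes, `a = β ∘ c`. Then `q = ∑ aᵢ λᵢ = ∑ β_s v_s ∈ P`,
`x - q ∈ M`, and `ψ(x, x) = ω(x, q) = ∑ᵢⱼ Λᵢⱼ conj(aᵢ) aⱼ`, which regroups by colours into
`∑_{s,t} conj(β_s) β_t (∑_{c i = s, c j = t} Λᵢⱼ) = 0`.
-/

namespace IsSymplForm

variable {H : Type*} [AddCommGroup H] [Module ℂ H] {ω : H → H → ℂ}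

def toSesq (hω : IsSymplForm ω) : H →ₗ⋆[ℂ] H →ₗ[ℂ] ℂ :=
  LinearMap.mk₂'ₛₗ (starRingEnd ℂ) (RingHom.id ℂ) ω hω.add_left hω.smul_left
    hω.add_right hω.smul_right

@[simp]
theorem toSesq_apply (hω : IsSymplForm ω) (x y : H) : hω.toSesq x y = ω x y := rfl

theorem sub_left (hω : IsSymplForm ω) (x y z : H) : ω (x - y) z = ω x z - ω y z :=
  (hω.toSesq.flip z).map_sub x y

theorem sub_right (hω : IsSymplForm ω) (x y z : H) : ω x (y - z) = ω x y - ω x z :=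
  (hω.toSesq x).map_sub y z

theorem sum_left (hω : IsSymplForm ω) {ι : Type*} (s : Finset ι) (f : ι → H) (y : H) :
    ω (∑ i ∈ s, f i) y = ∑ i ∈ s, ω (f i) y :=
  map_sum (hω.toSesq.flip y) f s

theorem sum_right (hω : IsSymplForm ω) {ι : Type*} (x : H) (s : Finset ι) (f : ι → H) :
    ω x (∑ i ∈ s, f i) = ∑ i ∈ s, ω x (f i) :=
  map_sum (hω.toSesq x) f s

end IsSymplForm

def IsIsotropic {H : Type*} [AddCommGroup H] [Module ℂ H] (ω : H → H → ℂ)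
    (L : Submodule ℂ H) : Prop :=
  ∀ x ∈ L, ∀ y ∈ L, ω x y = 0

section Isotropic

variable {H : Type*} [AddCommGroup H] [Module ℂ H] {ω : H → H → ℂ}

theorem isIsotropic_span (hω : IsSymplForm ω) {s : Set H}
    (hs : ∀ x ∈ s, ∀ y ∈ s, ω x y = 0) : IsIsotropic ω (Submodule.span ℂ s) := by
  intro x hx y hy
  have hleft : Submodule.span ℂ s ≤ LinearMap.ker (hω.toSesq.flip y) :=
    Submodule.span_le.mpr fun x' hx' =>
      (Submodule.span_le.mpr fun y' hy' => hs x' hx' y' hy' :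
        Submodule.span ℂ s ≤ LinearMap.ker (hω.toSesq x')) hy
  exact hleft hx

theorem isIsotropic_span_range (hω : IsSymplForm ω) {ι : Type*} {f : ι → H}
    (hf : ∀ i j, ω (f i) (f j) = 0) : IsIsotropic ω (Submodule.span ℂ (Set.range f)) :=
  isIsotropic_span hω (by rintro _ ⟨i, rfl⟩ _ ⟨j, rfl⟩; exact hf i j)

theorem IsIsotropic.apply_eq_zero_of_mem_inf_of_mem_sup (hω : IsSymplForm ω)
    {L1 L2 : Submodule ℂ H} (h1 : IsIsotropic ω L1) (h2 : IsIsotropic ω L2) {d y : H}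
    (hd : d ∈ L1 ⊓ L2) (hy : y ∈ L1 ⊔ L2) : ω d y = 0 := by
  obtain ⟨y₁, hy₁, y₂, hy₂, rfl⟩ := Submodule.mem_sup.mp hy
  rw [hω.add_right, h1 d hd.1 y₁ hy₁, h2 d hd.2 y₂ hy₂, add_zero]

end Isotropic

section MaslovIndex

variable {H : Type*} [AddCommGroup H] [Module ℂ H]

theorem firstPart_mem_and_sub_mem {L1 L2 : Submodule ℂ H} {x : H} (hx : x ∈ L1 ⊔ L2) :
    firstPart L1 L2 x ∈ L1 ∧ x - firstPart L1 L2 x ∈ L2 := by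
  rw [firstPart, dif_pos hx]
  obtain ⟨h1, y, hy, hxy⟩ := Classical.choose_spec (Submodule.mem_sup.mp hx)
  exact ⟨h1, eq_sub_of_add_eq' hxy ▸ hy⟩

theorem maslovForm_add_self {ω : H → H → ℂ} (hω : IsSymplForm ω) {L1 L2 : Submodule ℂ H}
    (h1 : IsIsotropic ω L1) (h2 : IsIsotropic ω L2) {m q : H} (hm : m ∈ L1) (hq : q ∈ L2) :
    maslovForm ω L1 L2 (m + q) (m + q) = ω m q := by
  obtain ⟨hf1, hf2⟩ := firstPart_mem_and_sub_mem (Submodule.add_mem_sup hm hq)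
  set f := firstPart L1 L2 (m + q)
  have hd1 : f - m ∈ L1 := L1.sub_mem hf1 hm
  have hd2 : f - m ∈ L2 := by
    rw [show f - m = q - (m + q - f) by abel]
    exact L2.sub_mem hq hf2
  have : maslovForm ω L1 L2 (m + q) (m + q) = ω (m + (f - m)) (q - (f - m)) := by
    rw [maslovForm, add_sub_cancel, show q - (f - m) = m + q - f by abel]
  rw [this, hω.add_left, hω.sub_right m, hω.sub_right (f - m), h1 m hm _ hd1, h1 _ hd1 _ hd1,
    h2 _ hd2 q hq]
  ring

theorem sSup_finrank_eq_zero_of_forall_not {p : H → Prop} {W : Submodule ℂ H}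
    (h : ∀ x ∈ W, ¬ p x) :
    sSup {d : ℕ | ∃ S : Submodule ℂ H, S ≤ W ∧ Module.finrank ℂ S = d ∧
      ∀ x ∈ S, x ≠ 0 → p x} = 0 := by
  refine Nat.eq_zero_of_le_zero (csSup_le' ?_)
  rintro _ ⟨S, hSW, rfl, hS⟩
  have : S = ⊥ := (Submodule.eq_bot_iff S).mpr fun x hx =>
    by_contra fun hx0 => h x (hSW hx) (hS x hx hx0)
  rw [this, finrank_bot]

theorem posIndex_eq_zero {ψ : H → H → ℂ} {W : Submodule ℂ H}
    (h : ∀ x ∈ W, (ψ x x).re ≤ 0) : posIndex ψ W = 0 :=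
  sSup_finrank_eq_zero_of_forall_not fun x hx => (h x hx).not_gt

theorem negIndex_eq_zero {ψ : H → H → ℂ} {W : Submodule ℂ H}
    (h : ∀ x ∈ W, 0 ≤ (ψ x x).re) : negIndex ψ W = 0 :=
  sSup_finrank_eq_zero_of_forall_not fun x hx => (h x hx).not_gt

theorem maslovIndex_eq_zero_of_forall {ω : H → H → ℂ} {L1 L2 L3 : Submodule ℂ H}
    (h : ∀ x ∈ (L1 ⊔ L2) ⊓ L3, maslovForm ω L1 L2 x x = 0) : maslovIndex ω L1 L2 L3 = 0 := by
  rw [maslovIndex, posIndex_eq_zero fun x hx => by simp [h x hx],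
    negIndex_eq_zero fun x hx => by simp [h x hx]]
  rfl

end MaslovIndex

open Finset in
theorem sum_sum_smul_comp_eq_zero {ι κ R A : Type*} [Fintype ι] [Fintype κ]
    [DecidableEq κ] [Semiring R] [AddCommMonoid A] [Module R A]
    (Λ : ι → ι → R) (c : ι → κ) (g : κ → κ → A)
    (hblock : ∀ s t : κ, ∑ i ∈ univ.filter (fun i => c i = s),
      ∑ j ∈ univ.filter (fun j => c j = t), Λ i j = 0) :
    ∑ i, ∑ j, Λ i j • g (c i) (c j) = 0 := by
  calc ∑ i, ∑ j, Λ i j • g (c i) (c j)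
      = ∑ s, ∑ i ∈ univ.filter (fun i => c i = s), ∑ t,
          ∑ j ∈ univ.filter (fun j => c j = t), Λ i j • g s t := by
        rw [← Finset.sum_fiberwise univ c]
        refine sum_congr rfl fun s _ => sum_congr rfl fun i hi => ?_
        rw [← Finset.sum_fiberwise univ c]
        refine sum_congr rfl fun t _ => sum_congr rfl fun j hj => ?_
        rw [(mem_filter.mp hi).2, (mem_filter.mp hj).2]
    _ = ∑ s, ∑ t, (∑ i ∈ univ.filter (fun i => c i = s),
          ∑ j ∈ univ.filter (fun j => c j = t), Λ i j) • g s t := by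
        simp only [sum_smul]
        exact sum_congr rfl fun s _ => sum_comm
    _ = 0 := by simp [hblock]

section ColoredLagrangians

open Finset

variable {H : Type*} [AddCommGroup H] [Module ℂ H] {ω : H → H → ℂ} {k n : ℕ}
  {μ lam : Fin k → H}

def colorSpan (μ : Fin k → H) (c : Fin k → Fin n) (v : Fin n → H) : Submodule ℂ H :=
  Submodule.span ℂ ({x : H | ∃ i j, c i = c j ∧ x = μ i - μ j} ∪ Set.range v)

theorem sympl_mu_v (hω : IsSymplForm ω)
    (hml : ∀ i j, ω (μ i) (lam j) = if i = j then -1 else 0) {c : Fin k → Fin n} {v : Fin n → H}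
    (hv : ∀ s, v s = ∑ i ∈ univ.filter (fun i => c i = s), lam i) (i : Fin k) (s : Fin n) :
    ω (μ i) (v s) = if c i = s then -1 else 0 := by
  rw [hv, hω.sum_right]
  simp [hml]

theorem isIsotropic_colorSpan (hω : IsSymplForm ω) (hμμ : ∀ i j, ω (μ i) (μ j) = 0)
    (hll : ∀ i j, ω (lam i) (lam j) = 0)
    (hml : ∀ i j, ω (μ i) (lam j) = if i = j then -1 else 0)
    {c : Fin k → Fin n} {v : Fin n → H}
    (hv : ∀ s, v s = ∑ i ∈ univ.filter (fun i => c i = s), lam i) :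
    IsIsotropic ω (colorSpan μ c v) := by
  have hdiff_v : ∀ i j, c i = c j → ∀ s, ω (μ i - μ j) (v s) = 0 := fun i j hij s => by
    rw [hω.sub_left, sympl_mu_v hω hml hv, sympl_mu_v hω hml hv, hij, sub_self]
  refine isIsotropic_span hω ?_
  rintro _ (⟨i, j, hij, rfl⟩ | ⟨s, rfl⟩) _ (⟨p, q, hpq, rfl⟩ | ⟨t, rfl⟩)
  · simp only [hω.sub_left, hω.sub_right, hμμ, sub_self]
  · exact hdiff_v i j hij t
  · rw [hω.skew, hdiff_v p q hpq s, map_zero, neg_zero]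
  · simp only [hv, hω.sum_left, hω.sum_right, hll, sum_const_zero]

theorem sympl_mu_sum_smul_w (hω : IsSymplForm ω) (hμμ : ∀ i j, ω (μ i) (μ j) = 0)
    (hml : ∀ i j, ω (μ i) (lam j) = if i = j then -1 else 0)
    {Λ : Matrix (Fin k) (Fin k) ℝ} {w : Fin k → H}
    (hw : ∀ i, w i = lam i - ∑ j, ((Λ i j : ℂ) • μ j)) (a : Fin k → ℂ) (i : Fin k) :
    ω (μ i) (∑ l, a l • w l) = -a i := by
  simp only [hw, hω.sum_right, hω.sub_right, hω.smul_right, hml, hμμ, mul_zero, sum_const_zero,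
    sub_zero]
  simp

theorem sympl_sum_smul_w_sum_smul_lam (hω : IsSymplForm ω) (hll : ∀ i j, ω (lam i) (lam j) = 0)
    (hml : ∀ i j, ω (μ i) (lam j) = if i = j then -1 else 0)
    {Λ : Matrix (Fin k) (Fin k) ℝ} {w : Fin k → H}
    (hw : ∀ i, w i = lam i - ∑ j, ((Λ i j : ℂ) • μ j)) (a b : Fin k → ℂ) :
    ω (∑ i, a i • w i) (∑ j, b j • lam j) = ∑ i, ∑ j, Λ i j • (starRingEnd ℂ (a i) * b j) := by
  have hwl : ∀ i j, ω (w i) (lam j) = Λ i j := fun i j => by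
    simp only [hw, hω.sub_left, hω.sum_left, hω.smul_left, hll, hml]
    simp
  simp only [hω.sum_left, hω.sum_right, hω.smul_left, hω.smul_right, hwl, Complex.real_smul]
  exact sum_congr rfl fun i _ => sum_congr rfl fun j _ => by ring

theorem sum_smul_w_sub_sum_smul_lam_mem {Λ : Matrix (Fin k) (Fin k) ℝ} {w : Fin k → H}
    (hw : ∀ i, w i = lam i - ∑ j, ((Λ i j : ℂ) • μ j)) (a : Fin k → ℂ) :
    ∑ i, a i • w i - ∑ i, a i • lam i ∈ Submodule.span ℂ (Set.range μ) := by
  rw [← sum_sub_distrib]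
  refine Submodule.sum_mem _ fun i _ => ?_
  rw [← smul_sub, hw i, sub_sub_cancel_left]
  exact Submodule.smul_mem _ _ <| Submodule.neg_mem _ <| Submodule.sum_mem _ fun j _ =>
    Submodule.smul_mem _ _ (Submodule.subset_span ⟨j, rfl⟩)

theorem sum_smul_lam_mem_colorSpan {c : Fin k → Fin n} {v : Fin n → H}
    (hv : ∀ s, v s = ∑ i ∈ univ.filter (fun i => c i = s), lam i) {a : Fin k → ℂ}
    (ha : Function.FactorsThrough a c) : ∑ i, a i • lam i ∈ colorSpan μ c v := by
  rw [← Finset.sum_fiberwise univ c]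
  refine Submodule.sum_mem _ fun s _ => ?_
  have : ∑ i ∈ univ.filter (fun i => c i = s), a i • lam i = Function.extend c a 0 s • v s := by
    rw [hv, smul_sum]
    refine sum_congr rfl fun i hi => ?_
    rw [← (mem_filter.mp hi).2, ha.extend_apply]
  rw [this]
  exact Submodule.smul_mem _ _ (Submodule.subset_span (Or.inr ⟨s, rfl⟩))

theorem factorsThrough_of_sum_smul_w_mem (hω : IsSymplForm ω)
    (hμμ : ∀ i j, ω (μ i) (μ j) = 0) (hll : ∀ i j, ω (lam i) (lam j) = 0)
    (hml : ∀ i j, ω (μ i) (lam j) = if i = j then -1 else 0)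
    {c : Fin k → Fin n} {v : Fin n → H}
    (hv : ∀ s, v s = ∑ i ∈ univ.filter (fun i => c i = s), lam i)
    {Λ : Matrix (Fin k) (Fin k) ℝ} {w : Fin k → H}
    (hw : ∀ i, w i = lam i - ∑ j, ((Λ i j : ℂ) • μ j)) {a : Fin k → ℂ}
    (hx : ∑ l, a l • w l ∈ Submodule.span ℂ (Set.range μ) ⊔ colorSpan μ c v) :
    Function.FactorsThrough a c := by
  intro i j hij
  have hdiff : μ i - μ j ∈ Submodule.span ℂ (Set.range μ) ⊓ colorSpan μ c v :=
    ⟨Submodule.sub_mem _ (Submodule.subset_span ⟨i, rfl⟩) (Submodule.subset_span ⟨j, rfl⟩),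
      Submodule.subset_span (Or.inl ⟨i, j, hij, rfl⟩)⟩
  have := (isIsotropic_span_range hω hμμ).apply_eq_zero_of_mem_inf_of_mem_sup hω
    (isIsotropic_colorSpan hω hμμ hll hml hv) hdiff hx
  rw [hω.sub_left, sympl_mu_sum_smul_w hω hμμ hml hw, sympl_mu_sum_smul_w hω hμμ hml hw] at this
  linear_combination -this

end ColoredLagrangians

theorem maslovIndex_colored_vanishing_general {H : Type*} [AddCommGroup H] [Module ℂ H]
    {k n : ℕ}
    (μ lam : Fin k → H)
    (ω : H → H → ℂ) (hω : IsSymplForm ω)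
    (hμμ : ∀ i j, ω (μ i) (μ j) = 0)
    (hll : ∀ i j, ω (lam i) (lam j) = 0)
    (hml : ∀ i j, ω (μ i) (lam j) = if i = j then -1 else 0)
    (c : Fin k → Fin n)
    (Λ : Matrix (Fin k) (Fin k) ℝ)
    (hblock : ∀ s t : Fin n,
      ∑ i ∈ Finset.univ.filter (fun i => c i = s),
        ∑ j ∈ Finset.univ.filter (fun j => c j = t), Λ i j = 0)
    (v : Fin n → H)
    (hv : ∀ s, v s = ∑ i ∈ Finset.univ.filter (fun i => c i = s), lam i)
    (w : Fin k → H) (hw : ∀ i, w i = lam i - ∑ j, ((Λ i j : ℂ) • μ j))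
    (M P VΛ : Submodule ℂ H)
    (hM : M = Submodule.span ℂ (Set.range μ))
    (hP : P = Submodule.span ℂ
      ({x : H | ∃ i j, c i = c j ∧ x = μ i - μ j} ∪ Set.range v))
    (hV : VΛ = Submodule.span ℂ (Set.range w)) :
    maslovIndex ω M P VΛ = 0 := by
  change P = colorSpan μ c v at hP
  subst hM hP hV
  refine maslovIndex_eq_zero_of_forall fun x ⟨hxMP, hxV⟩ => ?_
  obtain ⟨a, rfl⟩ := (Submodule.mem_span_range_iff_exists_fun ℂ).mp hxV
  have ha := factorsThrough_of_sum_smul_w_mem hω hμμ hll hml hv hw hxMP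
  have hq := sum_smul_lam_mem_colorSpan (μ := μ) hv ha
  have hPiso := isIsotropic_colorSpan hω hμμ hll hml hv
  rw [← sub_add_cancel (∑ i, a i • w i) (∑ i, a i • lam i),
    maslovForm_add_self hω (isIsotropic_span_range hω hμμ) hPiso
      (sum_smul_w_sub_sum_smul_lam_mem hw a) hq,
    hω.sub_left, hPiso _ hq _ hq, sub_zero, sympl_sum_smul_w_sum_smul_lam hω hll hml hw]
  simpa only [ha.extend_apply] using sum_sum_smul_comp_eq_zero Λ c
    (fun s t => starRingEnd ℂ (Function.extend c a 0 s) * Function.extend c a 0 t) hblock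

/-- For a coloring `c` and a real symmetric matrix `Λ` whose color-blocks all
sum to zero, the Maslov triple index `τ(M, P, V_Λ)` vanishes. -/
theorem maslovIndex_colored_vanishing {H : Type*} [AddCommGroup H] [Module ℂ H]
    {k n : ℕ} (hk : 1 ≤ k)
    (b : Module.Basis (Fin k ⊕ Fin k) ℂ H) (μ lam : Fin k → H)
    (hμ : ∀ i, μ i = b (Sum.inl i)) (hlam : ∀ i, lam i = b (Sum.inr i))
    (ω : H → H → ℂ) (hω : IsSymplForm ω)
    (hμμ : ∀ i j, ω (μ i) (μ j) = 0)
    (hll : ∀ i j, ω (lam i) (lam j) = 0)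
    (hml : ∀ i j, ω (μ i) (lam j) = if i = j then -1 else 0)
    (c : Fin k → Fin n) (hc : Function.Surjective c)
    (Λ : Matrix (Fin k) (Fin k) ℝ) (hΛ : Λ.IsSymm)
    (hblock : ∀ s t : Fin n,
      ∑ i ∈ Finset.univ.filter (fun i => c i = s),
        ∑ j ∈ Finset.univ.filter (fun j => c j = t), Λ i j = 0)
    (v : Fin n → H)
    (hv : ∀ s, v s = ∑ i ∈ Finset.univ.filter (fun i => c i = s), lam i)
    (w : Fin k → H) (hw : ∀ i, w i = lam i - ∑ j, ((Λ i j : ℂ) • μ j))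
    (M P VΛ : Submodule ℂ H)
    (hM : M = Submodule.span ℂ (Set.range μ))
    (hP : P = Submodule.span ℂ
      ({x : H | ∃ i j, c i = c j ∧ x = μ i - μ j} ∪ Set.range v))
    (hV : VΛ = Submodule.span ℂ (Set.range w)) :
    maslovIndex ω M P VΛ = 0 :=
  maslovIndex_colored_vanishing_general μ lam ω hω hμμ hll hml c Λ hblock v hv w hw M P VΛ hM hP hV
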